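/- arXiv:2301.01132 — 3 statements merged into one kernel-verified Lean document; each statement's English description precedes it below -/
import Mathlib

section
/- Let n, m ≥ 1 be integers, let p = (p_{n-1}, p_{n-2}, …, p_1, p_0) ∈ GF(2)^n, and let s ∈ GF(2)^n be an initial state. Define the LFSR sequence of column vectors by s_0 = s and, for each i ≥ 0, s_{i+1} = (a, (s_i)_0, (s_i)_1, …, (s_i)_{n-2})^T, where a = Σ_{j=0}^{n-1} p_{n-1-j} (s_i)_j with all arithmetic in GF(2). Let H be the n × m matrix over GF(2) whose columns are s_0, s_1, …, s_{m-1}. For a message M = (M_0, M_1, …, M_{m-1}) ∈ GF(2)^m, set M(x) = M_{m-1}x^{m-1} + … + M_1 x + M_0 ∈ GF(2)[x], and set p(x) = x^n + p_{n-1}x^{n-1} + … + p_1 x + p_0 ∈ GF(2)[x]. If p(x) divides M(x) in GF(2)[x], then H · M = 0 in GF(2)^n (Proposition 1: the LFSR-based Toeplitz hash of any message whose polynomial is a multiple of the feedback polynomial vanishes). -/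
open Polynomial Matrix

/-- One step of the linear feedback shift register with feedback coefficients
`p` (where `p j` is the coefficient `p_j`): shift every entry down by one and
prepend the GF(2) inner product `∑_j p_{n-1-j} s_j`. -/
def lfsrStep {n : ℕ} (p : Fin n → ZMod 2) (s : Fin n → ZMod 2) : Fin n → ZMod 2 :=
  fun i => if h : (i : ℕ) = 0 then ∑ j : Fin n, p j.rev * s j
           else s ⟨(i : ℕ) - 1, by omega⟩

/-- The polynomial `p(x) = x^n + p_{n-1} x^{n-1} + ⋯ + p_1 x + p_0` over GF(2). -/
noncomputable def feedbackPoly {n : ℕ} (p : Fin n → ZMod 2) : Polynomial (ZMod 2) :=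
  X ^ n + ∑ j : Fin n, C (p j) * X ^ (j : ℕ)

/-- The message polynomial `M(x) = M_{m-1} x^{m-1} + ⋯ + M_1 x + M_0` over GF(2). -/
noncomputable def msgPoly {m : ℕ} (M : Fin m → ZMod 2) : Polynomial (ZMod 2) :=
  ∑ i : Fin m, C (M i) * X ^ (i : ℕ)

/-- The LFSR output sequence extended to negative times by the initial state. -/
def lfsrF {n : ℕ} (hn : 0 < n) (p s : Fin n → ZMod 2) (t : ℤ) : ZMod 2 :=
  if 0 ≤ t then (lfsrStep p)^[t.toNat] s ⟨0, hn⟩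
  else if h : (-t).toNat < n then s ⟨(-t).toNat, h⟩ else 0

/-- State formula: entry `i` of the state at time `t` is `F (t - i)`. -/
lemma lfsr_state_eq {n : ℕ} (hn : 0 < n) (p s : Fin n → ZMod 2) :
    ∀ (t : ℕ) (i : Fin n), (lfsrStep p)^[t] s i = lfsrF hn p s ((t : ℤ) - (i : ℕ)) := by
  intro t
  induction t with
  | zero =>
    intro i
    simp only [Function.iterate_zero, id_eq]
    rcases Nat.eq_zero_or_pos (i : ℕ) with h | h
    · have hi : i = ⟨0, hn⟩ := Fin.ext h
      subst hi
      simp [lfsrF]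
    · rw [lfsrF, if_neg (by push_cast; omega)]
      rw [dif_pos (by push_cast; omega)]
      congr 1
      apply Fin.ext
      push_cast
      omega
  | succ t ih =>
    intro i
    rw [Function.iterate_succ_apply']
    rcases Nat.eq_zero_or_pos (i : ℕ) with h | h
    · have hi : i = ⟨0, hn⟩ := Fin.ext h
      subst hi
      rw [show ((t + 1 : ℕ) : ℤ) - ((⟨0, hn⟩ : Fin n) : ℕ) = ((t + 1 : ℕ) : ℤ) by
        simp]
      rw [lfsrF, if_pos (by positivity)]
      rw [Int.toNat_natCast, Function.iterate_succ_apply']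
    · rw [lfsrStep]
      rw [dif_neg (by omega)]
      rw [ih ⟨(i : ℕ) - 1, by omega⟩]
      congr 1
      have : ((⟨(i : ℕ) - 1, by omega⟩ : Fin n) : ℕ) = (i : ℕ) - 1 := rfl
      rw [this]
      push_cast [Nat.cast_sub (by omega : 1 ≤ (i : ℕ))]
      ring

/-- The recurrence satisfied by `F` at positive times. -/
lemma lfsrF_rec {n : ℕ} (hn : 0 < n) (p s : Fin n → ZMod 2) (t : ℤ) (ht : 1 ≤ t) :
    lfsrF hn p s t = ∑ j : Fin n, p j.rev * lfsrF hn p s (t - 1 - (j : ℕ)) := by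
  have h0 : lfsrF hn p s t = (lfsrStep p)^[t.toNat] s ⟨0, hn⟩ := by
    rw [lfsrF, if_pos (by omega)]
  rw [h0, show t.toNat = (t - 1).toNat + 1 by omega, Function.iterate_succ_apply']
  rw [lfsrStep, dif_pos rfl]
  refine Finset.sum_congr rfl fun j _ => ?_
  rw [lfsr_state_eq hn p s ((t - 1).toNat) j]
  congr 2
  omega

/-- The recurrence rewritten with reversed indexing. -/
lemma lfsrF_rec' {n : ℕ} (hn : 0 < n) (p s : Fin n → ZMod 2) (t : ℤ) (ht : 1 ≤ t) :
    lfsrF hn p s t = ∑ j : Fin n, p j * lfsrF hn p s (t - (n : ℕ) + (j : ℕ)) := by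
  rw [lfsrF_rec hn p s t ht]
  rw [← (Fin.revPerm (n := n)).sum_comp _ _ (by simp)]
  refine Finset.sum_congr rfl fun j _ => ?_
  simp only [Fin.revPerm_apply, Fin.rev_rev]
  congr 2
  have h1 : ((Fin.rev j : Fin n) : ℕ) = n - (j + 1) := rfl
  rw [h1]
  have := j.isLt
  omega

/-- The linear functional `q ↦ ∑_d q_d · F (d - i)`. -/
noncomputable def lfsrPhi {n : ℕ} (hn : 0 < n) (p s : Fin n → ZMod 2) (i : ℤ) :
    Polynomial (ZMod 2) →ₗ[ZMod 2] ZMod 2 :=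
  Polynomial.lsum (fun d => lfsrF hn p s ((d : ℤ) - i) • LinearMap.id)

lemma lfsrPhi_monomial {n : ℕ} (hn : 0 < n) (p s : Fin n → ZMod 2) (i : ℤ) (d : ℕ)
    (c : ZMod 2) :
    lfsrPhi hn p s i (monomial d c) = lfsrF hn p s ((d : ℤ) - i) * c := by
  rw [lfsrPhi, Polynomial.lsum_apply, Polynomial.sum_monomial_index _ _ (by simp)]
  simp [smul_eq_mul]

lemma lfsrPhi_mul_X_pow {n : ℕ} (hn : 0 < n) (p s : Fin n → ZMod 2) (i : ℤ)
    (q : Polynomial (ZMod 2)) (t : ℕ) :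
    lfsrPhi hn p s i (q * X ^ t) = lfsrPhi hn p s (i - t) q := by
  induction q using Polynomial.induction_on' with
  | add a b ha hb => rw [add_mul, map_add, ha, hb, map_add]
  | monomial d c =>
    rw [show (monomial d c : Polynomial (ZMod 2)) * X ^ t = monomial (d + t) c by
      rw [← C_mul_X_pow_eq_monomial, ← C_mul_X_pow_eq_monomial, mul_assoc, ← pow_add]]
    rw [lfsrPhi_monomial, lfsrPhi_monomial]
    congr 2
    push_cast
    ring

lemma lfsrPhi_feedback {n : ℕ} (hn : 0 < n) (p s : Fin n → ZMod 2) (i : ℤ)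
    (hi : i ≤ (n : ℤ) - 1) :
    lfsrPhi hn p s i (feedbackPoly p) = 0 := by
  rw [feedbackPoly, map_add, show (X : Polynomial (ZMod 2)) ^ n = monomial n 1 by
      rw [← C_mul_X_pow_eq_monomial, C_1, one_mul]]
  rw [lfsrPhi_monomial, mul_one]
  have : (lfsrPhi hn p s i) (∑ j : Fin n, C (p j) * X ^ (j : ℕ))
      = ∑ j : Fin n, lfsrF hn p s ((j : ℕ) - i) * p j := by
    rw [map_sum]
    refine Finset.sum_congr rfl fun j _ => ?_
    rw [C_mul_X_pow_eq_monomial, lfsrPhi_monomial]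
  rw [this]
  have hrec := lfsrF_rec' hn p s ((n : ℤ) - i) (by omega)
  have : ∑ j : Fin n, lfsrF hn p s ((j : ℕ) - i) * p j
      = lfsrF hn p s ((n : ℤ) - i) := by
    rw [hrec]
    refine Finset.sum_congr rfl fun j _ => ?_
    rw [mul_comm]
    congr 2
    ring
  rw [this]
  exact CharTwo.add_self_eq_zero _

lemma lfsrPhi_mul_eq_zero {n : ℕ} (hn : 0 < n) (p s : Fin n → ZMod 2)
    (q : Polynomial (ZMod 2)) :
    ∀ i : ℤ, i ≤ (n : ℤ) - 1 → lfsrPhi hn p s i (feedbackPoly p * q) = 0 := by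
  induction q using Polynomial.induction_on' with
  | add a b ha hb =>
    intro i hi
    rw [mul_add, map_add, ha i hi, hb i hi, add_zero]
  | monomial d c =>
    intro i hi
    rw [show feedbackPoly p * monomial d c = c • (feedbackPoly p * X ^ d) by
      rw [← C_mul_X_pow_eq_monomial, smul_eq_C_mul]; ring]
    rw [LinearMap.map_smul, lfsrPhi_mul_X_pow, lfsrPhi_feedback hn p s _ (by omega)]
    simp

/-- Proposition 1: if `p(x)` divides `M(x)` in GF(2)[x], then the LFSR-based
Toeplitz hash `H · M` vanishes, where the columns of `H` are the successive
LFSR states `s₀ = s, s₁, …, s_{m-1}`. -/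
theorem lfsr_toeplitz_hash_eq_zero_of_dvd (n m : ℕ) (hn : 1 ≤ n) (hm : 1 ≤ m)
    (p s : Fin n → ZMod 2) (M : Fin m → ZMod 2)
    (hdvd : feedbackPoly p ∣ msgPoly M) :
    (Matrix.of fun (i : Fin n) (k : Fin m) => (lfsrStep p)^[(k : ℕ)] s i).mulVec M = 0 := by
  obtain ⟨q, hq⟩ := hdvd
  funext i
  have key : lfsrPhi hn p s (i : ℕ) (msgPoly M) = 0 := by
    rw [hq]
    exact lfsrPhi_mul_eq_zero hn p s q (i : ℕ) (by have := i.isLt; omega)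
  have hphi : lfsrPhi hn p s (i : ℕ) (msgPoly M)
      = ∑ k : Fin m, lfsrF hn p s ((k : ℕ) - (i : ℕ)) * M k := by
    rw [msgPoly, map_sum]
    refine Finset.sum_congr rfl fun k _ => ?_
    rw [C_mul_X_pow_eq_monomial, lfsrPhi_monomial]
  simp only [Matrix.mulVec, dotProduct, Matrix.of_apply, Pi.zero_apply]
  rw [← key, hphi]
  refine Finset.sum_congr rfl fun k _ => ?_
  rw [lfsr_state_eq hn p s (k : ℕ) i]
end

section
/- Let n, m ≥ 1 be integers and let M ∈ GF(2)[x] be a nonzero polynomial with deg M ≤ m. If p is chosen uniformly at random from the (nonempty) set of monic irreducible polynomials of degree exactly n in GF(2)[x], then the probability that p divides M is at most m · 2^{1−n}. -/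
/-!
Over a finite field with `q` elements, the monic irreducible polynomials of degree dividing `n`
are exactly the distinct irreducible factors of the squarefree polynomial `X ^ q ^ n - X`, so
`∑ d ∣ n, d * N d = q ^ n` where `N d` counts those of degree `d`. Each proper divisor `d` of `n`
contributes at most `q ^ d`, and `∑ d ≤ n / 2, q ^ d ≤ q ^ n - q ^ (n - 1)`; hence
`q ^ (n - 1) ≤ n * N n`. On the other hand the distinct monic irreducible divisors of `M` have
degrees summing to at most `deg M`, so at most `m / n` of them have degree `n`.
-/

open Polynomial UniqueFactorizationMonoid Finset

namespace Nat

theorem sum_Icc_one_pow_add_le {q : ℕ} (hq : 2 ≤ q) (k : ℕ) :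
    ∑ d ∈ Icc 1 k, q ^ d + q ≤ q ^ (k + 1) := by
  induction k with
  | zero => simp
  | succ k ih =>
    rw [sum_Icc_succ_top (by omega), pow_succ q (k + 1)]
    nlinarith [Nat.mul_le_mul_left (q ^ (k + 1)) hq]

theorem properDivisors_subset_Icc_one_half (n : ℕ) : n.properDivisors ⊆ Icc 1 (n / 2) := by
  intro d hd
  obtain ⟨⟨k, rfl⟩, hlt⟩ := mem_properDivisors.1 hd
  have hd0 := pos_of_mem_properDivisors hd
  have hk : 2 ≤ k := by
    by_contra! h
    interval_cases k <;> simp_all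
  rw [mem_Icc, le_div_iff_mul_le two_pos]
  exact ⟨hd0, Nat.mul_le_mul_left d hk⟩

theorem sum_properDivisors_pow_add_pow_pred_le {q n : ℕ} (hq : 2 ≤ q) (hn : n ≠ 0) :
    ∑ d ∈ n.properDivisors, q ^ d + q ^ (n - 1) ≤ q ^ n := by
  have hdouble : 2 * q ^ (n - 1) ≤ q ^ n := by
    rw [← Nat.sub_one_add_one hn, pow_succ']
    exact Nat.mul_le_mul_right _ hq
  rcases lt_or_ge n 3 with hsmall | hlarge
  · interval_cases n <;> simp [Nat.prime_two.properDivisors] at hdouble ⊢ <;> omega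
  have hhalf : q ^ (n / 2 + 1) ≤ q ^ (n - 1) := Nat.pow_le_pow_right (by omega) (by omega)
  calc ∑ d ∈ n.properDivisors, q ^ d + q ^ (n - 1)
      ≤ ∑ d ∈ Icc 1 (n / 2), q ^ d + q ^ (n - 1) :=
        Nat.add_le_add_right (sum_le_sum_of_subset (properDivisors_subset_Icc_one_half n)) _
    _ ≤ q ^ n := by have := sum_Icc_one_pow_add_le hq (n / 2); omega

end Nat

namespace Polynomial

variable {K : Type*} [Field K]

section DecidableEq

variable [DecidableEq K]

theorem natDegree_eq_sum_natDegree_normalizedFactors (f : K[X]) :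
    f.natDegree = ((normalizedFactors f).map natDegree).sum := by
  by_cases hf : f = 0
  · simp [hf]
  conv_lhs => rw [← leadingCoeff_mul_prod_normalizedFactors f]
  rw [natDegree_C_mul (leadingCoeff_ne_zero.2 hf),
    natDegree_multiset_prod _ (zero_notMem_normalizedFactors f)]

theorem sum_natDegree_toFinset_normalizedFactors_le (f : K[X]) :
    ∑ g ∈ (normalizedFactors f).toFinset, g.natDegree ≤ f.natDegree := by
  rw [natDegree_eq_sum_natDegree_normalizedFactors f, Finset.sum_eq_multiset_sum,
    Multiset.toFinset_val]
  obtain ⟨t, ht⟩ := Multiset.le_iff_exists_add.1 (Multiset.dedup_le (normalizedFactors f))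
  conv_rhs => rw [ht]
  simp

theorem _root_.Squarefree.sum_natDegree_toFinset_normalizedFactors {f : K[X]}
    (hf : Squarefree f) :
    ∑ g ∈ (normalizedFactors f).toFinset, g.natDegree = f.natDegree := by
  rw [natDegree_eq_sum_natDegree_normalizedFactors f, Finset.sum_eq_multiset_sum,
    Multiset.toFinset_val,
    ((squarefree_iff_nodup_normalizedFactors hf.ne_zero).1 hf).dedup]

end DecidableEq

theorem mul_ncard_monic_irreducible_dvd_le {f : K[X]} (hf : f ≠ 0) (n : ℕ) :
    n * {g : K[X] | g.Monic ∧ Irreducible g ∧ g.natDegree = n ∧ g ∣ f}.ncard ≤ f.natDegree := by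
  classical
  have hset : {g : K[X] | g.Monic ∧ Irreducible g ∧ g.natDegree = n ∧ g ∣ f} =
      ↑{g ∈ (normalizedFactors f).toFinset | g.natDegree = n} := by
    ext g
    simp only [Set.mem_ofPred_eq, coe_filter, Multiset.mem_toFinset,
      Polynomial.mem_normalizedFactors_iff hf]
    tauto
  rw [hset, Set.ncard_coe_finset, mul_comm, ← sum_const_nat fun g hg => (mem_filter.1 hg).2]
  exact (sum_le_sum_of_subset (filter_subset _ _)).trans
    (sum_natDegree_toFinset_normalizedFactors_le f)

section FiniteField

variable [Finite K]

theorem squarefree_X_pow_card_pow_sub_X {n : ℕ} (hn : n ≠ 0) :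
    Squarefree (X ^ Nat.card K ^ n - X : K[X]) := by
  have := Fintype.ofFinite K
  refine (galois_poly_separable (ringChar K) _ (dvd_pow ?_ hn)).squarefree
  rw [Nat.card_eq_fintype_card, ← CharP.cast_eq_zero_iff K]
  exact FiniteField.cast_card_eq_zero K

theorem mem_normalizedFactors_X_pow_card_pow_sub_X [DecidableEq K] {n : ℕ} (hn : n ≠ 0)
    {g : K[X]} :
    g ∈ normalizedFactors (X ^ Nat.card K ^ n - X : K[X]) ↔
      g.Monic ∧ Irreducible g ∧ g.natDegree ∣ n := by
  rw [Polynomial.mem_normalizedFactors_iff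
    (FiniteField.X_pow_card_pow_sub_X_ne_zero K hn Finite.one_lt_card)]
  constructor
  · rintro ⟨hirr, hmonic, hdvd⟩
    exact ⟨hmonic, hirr, hirr.natDegree_dvd_iff_dvd_X_pow_card_pow_sub_X.2 hdvd⟩
  · rintro ⟨hmonic, hirr, hdvd⟩
    exact ⟨hirr, hmonic, hirr.natDegree_dvd_iff_dvd_X_pow_card_pow_sub_X.1 hdvd⟩

theorem sum_divisors_mul_ncard_monic_irreducible {n : ℕ} (hn : n ≠ 0) :
    ∑ d ∈ n.divisors, d * {g : K[X] | g.Monic ∧ Irreducible g ∧ g.natDegree = d}.ncard =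
      Nat.card K ^ n := by
  classical
  set T := (normalizedFactors (X ^ Nat.card K ^ n - X : K[X])).toFinset
  have hfiber : ∀ d ∈ n.divisors, {g : K[X] | g.Monic ∧ Irreducible g ∧ g.natDegree = d} =
      ↑{g ∈ T | g.natDegree = d} := by
    intro d hd
    ext g
    simp only [Set.mem_ofPred_eq, coe_filter, T, Multiset.mem_toFinset,
      mem_normalizedFactors_X_pow_card_pow_sub_X hn]
    constructor
    · rintro ⟨hmonic, hirr, rfl⟩
      exact ⟨⟨hmonic, hirr, Nat.dvd_of_mem_divisors hd⟩, rfl⟩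
    · rintro ⟨⟨hmonic, hirr, -⟩, rfl⟩
      exact ⟨hmonic, hirr, rfl⟩
  have hmaps : ∀ g ∈ T, g.natDegree ∈ n.divisors := fun g hg =>
    Nat.mem_divisors.2 ⟨((mem_normalizedFactors_X_pow_card_pow_sub_X hn).1
      (Multiset.mem_toFinset.1 hg)).2.2, hn⟩
  calc ∑ d ∈ n.divisors, d * {g : K[X] | g.Monic ∧ Irreducible g ∧ g.natDegree = d}.ncard
      = ∑ d ∈ n.divisors, ∑ g ∈ T with g.natDegree = d, g.natDegree := by
        refine sum_congr rfl fun d hd => ?_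
        rw [hfiber d hd, Set.ncard_coe_finset, mul_comm,
          sum_const_nat fun g hg => (mem_filter.1 hg).2]
    _ = ∑ g ∈ T, g.natDegree := sum_fiberwise_of_maps_to hmaps _
    _ = (X ^ Nat.card K ^ n - X : K[X]).natDegree :=
        (squarefree_X_pow_card_pow_sub_X hn).sum_natDegree_toFinset_normalizedFactors
    _ = Nat.card K ^ n := FiniteField.X_pow_card_pow_sub_X_natDegree_eq K hn Finite.one_lt_card

theorem card_pow_pred_le_mul_ncard_monic_irreducible {n : ℕ} (hn : n ≠ 0) :
    Nat.card K ^ (n - 1) ≤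
      n * {g : K[X] | g.Monic ∧ Irreducible g ∧ g.natDegree = n}.ncard := by
  have hterm (d : ℕ) (hd : d ≠ 0) :
      d * {g : K[X] | g.Monic ∧ Irreducible g ∧ g.natDegree = d}.ncard ≤ Nat.card K ^ d := by
    rw [← sum_divisors_mul_ncard_monic_irreducible hd]
    exact single_le_sum
      (f := fun d' => d' * {g : K[X] | g.Monic ∧ Irreducible g ∧ g.natDegree = d'}.ncard)
      (fun _ _ => Nat.zero_le _) (Nat.mem_divisors_self d hd)
  have hgauss := sum_divisors_mul_ncard_monic_irreducible (K := K) hn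
  rw [← Nat.insert_self_properDivisors hn, sum_insert Nat.self_notMem_properDivisors] at hgauss
  have hproper := sum_le_sum (s := n.properDivisors) fun d hd =>
    hterm d (Nat.pos_of_mem_properDivisors hd).ne'
  have := Nat.sum_properDivisors_pow_add_pow_pred_le Finite.one_lt_card (q := Nat.card K) hn
  omega

end FiniteField

end Polynomial

theorem prob_random_irreducible_divides_general (n m : ℕ) (hn : 1 ≤ n)
    (M : Polynomial (ZMod 2)) (hM : M ≠ 0) (hdeg : M.natDegree ≤ m) :
    ({q : Polynomial (ZMod 2) |
        q.Monic ∧ Irreducible q ∧ q.natDegree = n ∧ q ∣ M}.ncard : ℝ) /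
      ({q : Polynomial (ZMod 2) |
        q.Monic ∧ Irreducible q ∧ q.natDegree = n}.ncard : ℝ)
      ≤ (m : ℝ) * 2 ^ ((1 : ℤ) - (n : ℤ)) := by
  set N := {q : Polynomial (ZMod 2) | q.Monic ∧ Irreducible q ∧ q.natDegree = n ∧ q ∣ M}.ncard
  set D := {q : Polynomial (ZMod 2) | q.Monic ∧ Irreducible q ∧ q.natDegree = n}.ncard
  have hnum : n * N ≤ m := (mul_ncard_monic_irreducible_dvd_le hM n).trans hdeg
  have hden : 2 ^ (n - 1) ≤ n * D := by
    simpa using card_pow_pred_le_mul_ncard_monic_irreducible (K := ZMod 2) (n := n) (by omega)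
  have hD : 0 < D := Nat.pos_of_mul_pos_left (hden.trans_lt' (by positivity))
  have hcross : N * 2 ^ (n - 1) ≤ m * D :=
    calc N * 2 ^ (n - 1) ≤ N * (n * D) := Nat.mul_le_mul_left N hden
      _ = n * N * D := by ring
      _ ≤ m * D := Nat.mul_le_mul_right D hnum
  have hpow : (2 : ℝ) ^ ((1 : ℤ) - n) = ((2 : ℝ) ^ (n - 1))⁻¹ := by
    rw [← zpow_natCast, ← zpow_neg, Nat.cast_sub hn]
    norm_num
  rw [hpow, div_le_iff₀ (by positivity), mul_right_comm, ← div_eq_mul_inv,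
    le_div_iff₀ (by positivity)]
  exact_mod_cast hcross

/-- If `p` is chosen uniformly at random from the (nonempty) set of monic
irreducible polynomials of degree exactly `n` over GF(2), then the probability
that `p` divides a fixed nonzero polynomial `M` of degree at most `m` is at most
`m · 2^(1−n)`. The probability is expressed as the counting ratio. -/
theorem prob_random_irreducible_divides (n m : ℕ) (hn : 1 ≤ n) (hm : 1 ≤ m)
    (M : Polynomial (ZMod 2)) (hM : M ≠ 0) (hdeg : M.natDegree ≤ m) :
    ({q : Polynomial (ZMod 2) |
        q.Monic ∧ Irreducible q ∧ q.natDegree = n ∧ q ∣ M}.ncard : ℝ) /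
      ({q : Polynomial (ZMod 2) |
        q.Monic ∧ Irreducible q ∧ q.natDegree = n}.ncard : ℝ)
      ≤ (m : ℝ) * 2 ^ ((1 : ℤ) - (n : ℤ)) :=
  prob_random_irreducible_divides_general n m hn M hM hdeg
end

section
/- Let n, m ≥ 1, let M ∈ GF(2)[x] be a nonzero polynomial with deg M ≤ m, and let c ∈ GF(2)^n. For a monic irreducible polynomial p of degree n with coefficient vector (p_{n-1}, …, p_0), let W_p be the n × n matrix over GF(2) with first row (p_{n-1}, …, p_0), ones just below the diagonal, and zeros elsewhere. If p is chosen uniformly at random from the set of monic irreducible degree-n polynomials in GF(2)[x] and, independently, s is chosen uniformly at random from GF(2)^n, then the probability that M(W_p) · s = c is at most m · 2^{1−n} + 2^{−n}, where M(W_p) is the evaluation of M(x) at the matrix W_p. -/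
/-!
In the basis `xⁿ⁻¹, …, x, 1` of `GF(2)[x]/(p)`, the matrix `W_p` is the transpose of
multiplication by `x`, so `M(W_p)` is invertible as soon as `p ∤ M`, and then exactly one `s`
hashes to `c`. A polynomial `p ∣ M` may contribute all `2ⁿ` states, but the product of the monic
irreducible divisors of degree `n` divides `M`, so there are at most `m / n` of them. Conversely
there are at least `2ⁿ⁻¹ / n` monic irreducible polynomials of degree `n`: every element of
`GF(2ⁿ)` outside the proper subfields `GF(2ᵈ)`, `d ∣ n`, is one of the `n` roots of such a
polynomial, and the proper subfields have at most `2ⁿ⁻¹` elements in all.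
-/

open Polynomial Matrix

/-- The LFSR state-transition matrix `W`: first row `(p_{n-1}, …, p_1, p_0)`,
ones just below the diagonal, zeros elsewhere. -/
def lfsrMatrix {n : ℕ} (p : Fin n → ZMod 2) : Matrix (Fin n) (Fin n) (ZMod 2) :=
  Matrix.of fun i j => if (i : ℕ) = 0 then p j.rev
    else if (i : ℕ) = (j : ℕ) + 1 then 1 else 0

theorem Matrix.aeval_transpose {R ι : Type*} [CommSemiring R] [Fintype ι] [DecidableEq ι]
    (A : Matrix ι ι R) (p : R[X]) : aeval Aᵀ p = (aeval A p)ᵀ := by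
  simp only [aeval_eq_sum_range, transpose_sum, transpose_smul, transpose_pow]

theorem Matrix.ncard_setOf_mulVec_eq_le_one {R ι : Type*} [CommRing R] [Fintype ι]
    [DecidableEq ι] {A : Matrix ι ι R} (hA : IsUnit A) (c : ι → R) :
    {v | A *ᵥ v = c}.ncard ≤ 1 := by
  have hsub : {v | A *ᵥ v = c}.Subsingleton := fun v hv w hw =>
    mulVec_injective_of_isUnit hA (hv.trans hw.symm)
  exact (Set.ncard_le_one_iff hsub.finite).2 fun hv hw => hsub hv hw

theorem Set.ncard_setOf_fst_mem_and {α β : Type*} [Finite β] {s : Set α} (hs : s.Finite)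
    (P : α → β → Prop) :
    {x : α × β | x.1 ∈ s ∧ P x.1 x.2}.ncard = ∑ a ∈ hs.toFinset, {b | P a b}.ncard := by
  classical
  have : Fintype β := .ofFinite β
  have hset : {x : α × β | x.1 ∈ s ∧ P x.1 x.2} =
      ↑((hs.toFinset ×ˢ Finset.univ).filter fun x => P x.1 x.2) := by
    ext x; simp
  rw [hset, Set.ncard_coe_finset, Finset.card_filter, Finset.sum_product]
  refine Finset.sum_congr rfl fun a _ => ?_
  rw [← Finset.card_filter, ← Set.ncard_coe_finset]
  congr 1
  ext b; simp

theorem Polynomial.finite_setOf_natDegree_le {R : Type*} [CommRing R] [Finite R] (n : ℕ) :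
    {p : R[X] | p.natDegree ≤ n}.Finite := by
  have : Finite (degreeLT R (n + 1)) := .of_equiv _ (degreeLTEquiv R (n + 1)).toEquiv.symm
  refine (degreeLT R (n + 1) : Set R[X]).toFinite.subset fun p hp => ?_
  rw [SetLike.mem_coe, mem_degreeLT]
  exact (degree_le_natDegree).trans_lt (by exact_mod_cast Nat.lt_succ_of_le hp)

theorem transpose_lfsrMatrix_eq_leftMulMatrix {S : Type*} [CommRing S] [Algebra (ZMod 2) S]
    (pb : PowerBasis (ZMod 2) S) {n : ℕ} (hn : pb.dim = n) :
    (lfsrMatrix fun j : Fin n => (minpoly (ZMod 2) pb.gen).coeff j)ᵀ =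
      Algebra.leftMulMatrix (pb.basis.reindex ((finCongr hn).trans Fin.revPerm)) pb.gen := by
  subst hn
  ext i j
  rw [Algebra.leftMulMatrix_eq_repr_mul, Module.Basis.repr_reindex_apply,
    Module.Basis.reindex_apply, ← Algebra.leftMulMatrix_eq_repr_mul, pb.leftMulMatrix,
    ← pb.minpolyGen_eq]
  -- `pb.leftMulMatrix` is the companion matrix; over `GF(2)` its signs disappear.
  simp only [transpose_apply, lfsrMatrix, of_apply, Equiv.symm_trans_apply, Fin.revPerm_symm,
    Fin.revPerm_apply, finCongr_symm, finCongr_apply, Fin.cast_eq_self, ZMod.neg_eq_self_mod_two,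
    Fin.val_rev]
  split_ifs <;> first | rfl | omega

theorem isUnit_aeval_lfsrMatrix {n : ℕ} {p M : (ZMod 2)[X]} (hp : p.Monic) (hirr : Irreducible p)
    (hd : p.natDegree = n) (hpM : ¬ p ∣ M) :
    IsUnit (aeval (lfsrMatrix fun j : Fin n => p.coeff j) M) := by
  have := Fact.mk hirr
  have hW := transpose_lfsrMatrix_eq_leftMulMatrix (AdjoinRoot.powerBasis' hp) hd
  rw [AdjoinRoot.powerBasis'_gen, AdjoinRoot.minpoly_root hirr.ne_zero, hp.leadingCoeff,
    inv_one, C_1, mul_one] at hW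
  rw [← isUnit_transpose, ← aeval_transpose, hW, aeval_algHom_apply, AdjoinRoot.aeval_eq]
  exact (Ne.isUnit (mt AdjoinRoot.mk_eq_zero.mp hpM)).map _

open scoped Classical in
theorem ncard_setOf_aeval_lfsrMatrix_mulVec_eq_le {n : ℕ} {p : (ZMod 2)[X]} (hp : p.Monic)
    (hirr : Irreducible p) (hd : p.natDegree = n) (M : (ZMod 2)[X]) (c : Fin n → ZMod 2) :
    {s | aeval (lfsrMatrix fun j : Fin n => p.coeff j) M *ᵥ s = c}.ncard ≤
      if p ∣ M then 2 ^ n else 1 := by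
  split_ifs with hpM
  · simpa using Set.ncard_le_card {s | aeval (lfsrMatrix fun j : Fin n => p.coeff j) M *ᵥ s = c}
  · exact ncard_setOf_mulVec_eq_le_one (isUnit_aeval_lfsrMatrix hp hirr hd hpM) c

theorem Polynomial.mul_ncard_setOf_irreducible_dvd_le_natDegree {K : Type*} [Field K]
    {M : K[X]} (hM : M ≠ 0) (n : ℕ) :
    n * {q : K[X] | (q.Monic ∧ Irreducible q ∧ q.natDegree = n) ∧ q ∣ M}.ncard ≤
      M.natDegree := by
  set s := {q : K[X] | (q.Monic ∧ Irreducible q ∧ q.natDegree = n) ∧ q ∣ M}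
  obtain hs | hs := s.infinite_or_finite
  · simp [hs.ncard]
  have hmem (q) (hq : q ∈ hs.toFinset) := hs.mem_toFinset.1 hq
  have hprod : ∏ q ∈ hs.toFinset, q ∣ M := by
    refine Finset.prod_dvd_of_coprime (fun a ha b hb hab => ?_) fun q hq => (hmem q hq).2
    refine (hmem a ha).1.2.1.coprime_iff_not_dvd.2 fun hdvd => hab ?_
    exact eq_of_monic_of_associated (hmem a ha).1.1 (hmem b hb).1.1
      ((hmem a ha).1.2.1.associated_of_dvd (hmem b hb).1.2.1 hdvd)
  calc n * s.ncard = (∏ q ∈ hs.toFinset, q).natDegree := by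
        rw [natDegree_prod_of_monic _ _ fun q hq => (hmem q hq).1.1,
          Finset.sum_congr rfl fun q hq => (hmem q hq).1.2.2, Finset.sum_const, smul_eq_mul,
          mul_comm, Set.ncard_eq_toFinset_card _ hs]
    _ ≤ M.natDegree := natDegree_le_of_dvd hprod hM

namespace FiniteField

variable {k L : Type*} [Field k] [Finite k] [Field L] [Algebra k L] [FiniteDimensional k L]

theorem natDegree_minpoly_eq_finrank_or_pow_eq_self (α : L) :
    (minpoly k α).natDegree = Module.finrank k L ∨
      ∃ d ∈ (Module.finrank k L).properDivisors, α ^ Nat.card k ^ d = α := by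
  have hint : IsIntegral k α := .of_finite k α
  have hdvd := minpoly.degree_dvd hint
  refine (eq_or_ne _ _).imp_right fun hne => ⟨_, Nat.mem_properDivisors.2
    ⟨hdvd, (Nat.le_of_dvd Module.finrank_pos hdvd).lt_of_ne hne⟩, ?_⟩
  have h := (minpoly.irreducible hint).natDegree_dvd_iff_dvd_X_pow_card_pow_sub_X.mp dvd_rfl
  have := aeval_eq_zero_of_dvd_aeval_eq_zero h (minpoly.aeval k α)
  rwa [map_sub, map_pow, aeval_X, sub_eq_zero] at this

theorem natCard_le_mul_ncard_irreducible_add :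
    Nat.card L ≤ Module.finrank k L *
        {f : k[X] | f.Monic ∧ Irreducible f ∧ f.natDegree = Module.finrank k L}.ncard +
      ∑ d ∈ (Module.finrank k L).properDivisors, Nat.card k ^ d := by
  set n := Module.finrank k L
  have : Finite L := Module.finite_of_finite k
  have hS : {f : k[X] | f.Monic ∧ Irreducible f ∧ f.natDegree = n}.Finite :=
    (finite_setOf_natDegree_le n).subset fun f hf => hf.2.2.le
  have hq : 1 < Nat.card k := Finite.one_lt_card
  have hcover : Set.univ ⊆ (⋃ f ∈ hS.toFinset, f.rootSet L) ∪
      ⋃ d ∈ n.properDivisors, (X ^ Nat.card k ^ d - X : k[X]).rootSet L := by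
    intro α _
    have hint : IsIntegral k α := .of_finite k α
    rcases natDegree_minpoly_eq_finrank_or_pow_eq_self (k := k) α with h | ⟨d, hd, h⟩
    · refine Or.inl (Set.mem_biUnion (x := minpoly k α) ?_ ?_)
      · exact hS.mem_toFinset.2 ⟨minpoly.monic hint, minpoly.irreducible hint, h⟩
      · exact mem_rootSet.2 ⟨minpoly.ne_zero hint, minpoly.aeval k α⟩
    · refine Or.inr (Set.mem_biUnion hd (mem_rootSet.2 ⟨?_, by simp [h]⟩))
      exact X_pow_card_pow_sub_X_ne_zero _ (Nat.pos_of_mem_properDivisors hd).ne' hq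
  calc Nat.card L = (Set.univ : Set L).ncard := (Set.ncard_univ L).symm
    _ ≤ _ := (Set.ncard_le_ncard hcover).trans (Set.ncard_union_le _ _)
    _ ≤ ∑ f ∈ hS.toFinset, n + ∑ d ∈ n.properDivisors, Nat.card k ^ d := by
      gcongr
      · refine (Finset.set_ncard_biUnion_le _ _).trans (Finset.sum_le_sum fun f hf => ?_)
        exact (ncard_rootSet_le f L).trans (hS.mem_toFinset.1 hf).2.2.le
      · refine (Finset.set_ncard_biUnion_le _ _).trans (Finset.sum_le_sum fun d hd => ?_)
        refine (ncard_rootSet_le _ L).trans_eq ?_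
        exact X_pow_card_pow_sub_X_natDegree_eq _ (Nat.pos_of_mem_properDivisors hd).ne' hq
    _ = _ := by rw [Finset.sum_const, smul_eq_mul, mul_comm, Set.ncard_eq_toFinset_card _ hS]

theorem pow_le_mul_ncard_irreducible_add {n : ℕ} (hn : n ≠ 0) :
    Nat.card k ^ n ≤ n * {f : k[X] | f.Monic ∧ Irreducible f ∧ f.natDegree = n}.ncard +
      ∑ d ∈ n.properDivisors, Nat.card k ^ d := by
  obtain ⟨p, _⟩ := CharP.exists k
  have : Fact p.Prime := ⟨CharP.char_is_prime k p⟩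
  have : NeZero n := ⟨hn⟩
  simpa only [natCard_extension, finrank_extension] using
    natCard_le_mul_ncard_irreducible_add (k := k) (L := Extension k p n)

end FiniteField

theorem Nat.sum_two_pow_properDivisors_le (n : ℕ) :
    ∑ d ∈ n.properDivisors, 2 ^ d ≤ 2 ^ (n - 1) := by
  rcases Nat.lt_or_ge n 3 with hn | hn
  · interval_cases n <;> decide
  · have hlt : ∀ d ∈ n.properDivisors, d < n / 2 + 1 := fun d hd => by
      have := (Nat.le_div_iff_mul_le (Nat.pos_of_mem_properDivisors hd)).mp
        (Nat.one_lt_div_of_mem_properDivisors hd)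
      rw [Nat.lt_succ_iff, Nat.le_div_iff_mul_le two_pos]
      linarith
    exact (Nat.geomSum_lt le_rfl hlt).le.trans (Nat.pow_le_pow_right two_pos (by omega))

theorem two_pow_pred_le_mul_ncard_irreducible {n : ℕ} (hn : n ≠ 0) :
    2 ^ (n - 1) ≤ n * {f : (ZMod 2)[X] | f.Monic ∧ Irreducible f ∧ f.natDegree = n}.ncard := by
  have h := FiniteField.pow_le_mul_ncard_irreducible_add (k := ZMod 2) hn
  rw [Nat.card_zmod] at h
  have hsum := Nat.sum_two_pow_properDivisors_le n
  have hpow : 2 ^ n = 2 * 2 ^ (n - 1) := by rw [← pow_succ', Nat.sub_add_cancel (by omega)]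
  omega

open scoped Classical in
theorem ncard_setOf_aeval_lfsrMatrix_mulVec_eq_le_add {n : ℕ} (M : (ZMod 2)[X])
    (c : Fin n → ZMod 2) :
    {qs : (ZMod 2)[X] × (Fin n → ZMod 2) | (qs.1.Monic ∧ Irreducible qs.1 ∧ qs.1.natDegree = n) ∧
        aeval (lfsrMatrix fun j : Fin n => qs.1.coeff j) M *ᵥ qs.2 = c}.ncard ≤
      {q : (ZMod 2)[X] | (q.Monic ∧ Irreducible q ∧ q.natDegree = n) ∧ q ∣ M}.ncard * 2 ^ n +
        {q : (ZMod 2)[X] | q.Monic ∧ Irreducible q ∧ q.natDegree = n}.ncard := by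
  set S := {q : (ZMod 2)[X] | q.Monic ∧ Irreducible q ∧ q.natDegree = n}
  have hS : S.Finite := (finite_setOf_natDegree_le n).subset fun q hq => hq.2.2.le
  have hbad : {q : (ZMod 2)[X] | (q.Monic ∧ Irreducible q ∧ q.natDegree = n) ∧ q ∣ M} =
      ↑(hS.toFinset.filter (· ∣ M)) := by
    ext; simp [S]
  refine (Set.ncard_setOf_fst_mem_and hS
    (fun q s => aeval (lfsrMatrix fun j : Fin n => q.coeff j) M *ᵥ s = c)).trans_le ?_
  rw [Set.ncard_eq_toFinset_card S hS, hbad, Set.ncard_coe_finset]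
  calc _ ≤ ∑ q ∈ hS.toFinset, if q ∣ M then 2 ^ n else 1 :=
        Finset.sum_le_sum fun q hq => by
          obtain ⟨hp, hirr, hd⟩ := hS.mem_toFinset.1 hq
          exact ncard_setOf_aeval_lfsrMatrix_mulVec_eq_le hp hirr hd M c
    _ ≤ _ := by
      rw [Finset.sum_ite, Finset.sum_const, Finset.sum_const, smul_eq_mul, smul_eq_mul, mul_one]
      gcongr
      exact Finset.filter_subset _ _

theorem axu_lfsr_toeplitz_general (n m : ℕ) (hn : 1 ≤ n)
    (M : Polynomial (ZMod 2)) (hM : M ≠ 0) (hdeg : M.natDegree ≤ m)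
    (c : Fin n → ZMod 2) :
    ({qs : Polynomial (ZMod 2) × (Fin n → ZMod 2) |
        (qs.1.Monic ∧ Irreducible qs.1 ∧ qs.1.natDegree = n) ∧
        (Polynomial.aeval (lfsrMatrix fun j : Fin n => qs.1.coeff (j : ℕ)) M).mulVec qs.2
          = c}.ncard : ℝ) /
      (({q : Polynomial (ZMod 2) |
          q.Monic ∧ Irreducible q ∧ q.natDegree = n}.ncard : ℝ) * 2 ^ n)
      ≤ (m : ℝ) * 2 ^ ((1 : ℤ) - (n : ℤ)) + 2 ^ (-(n : ℤ)) := by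
  have hE := ncard_setOf_aeval_lfsrMatrix_mulVec_eq_le_add M c
  have hB := (mul_ncard_setOf_irreducible_dvd_le_natDegree hM n).trans hdeg
  have hN := two_pow_pred_le_mul_ncard_irreducible (n := n) (by omega)
  have hpow : 2 ^ n = 2 * 2 ^ (n - 1) := by rw [← pow_succ', Nat.sub_add_cancel hn]
  set b := {q : (ZMod 2)[X] | (q.Monic ∧ Irreducible q ∧ q.natDegree = n) ∧ q ∣ M}.ncard
  set N := {q : (ZMod 2)[X] | q.Monic ∧ Irreducible q ∧ q.natDegree = n}.ncard
  -- `2ⁿ b = 2 · 2ⁿ⁻¹ b ≤ 2 n N b ≤ 2 m N`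
  have hE' : _ ≤ (2 * m + 1) * N := hE.trans <| by
    nlinarith [Nat.mul_le_mul_left b hN, Nat.mul_le_mul_right N hB]
  have hrhs : (m : ℝ) * 2 ^ ((1 : ℤ) - n) + 2 ^ (-(n : ℤ)) = (2 * m + 1) / 2 ^ n := by
    rw [zpow_sub₀ two_ne_zero, _root_.zpow_neg, zpow_one, zpow_natCast]
    ring
  rw [hrhs]
  refine div_le_of_le_mul₀ (by positivity) (by positivity) ?_
  calc _ ≤ ((2 * m + 1) * N : ℝ) := by exact_mod_cast hE'
    _ = _ := by field_simp

/-- AXU property of LFSR-based Toeplitz hashing: if `p` is a uniformly random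
monic irreducible polynomial of degree `n` over GF(2) and `s` is an independent
uniformly random vector in GF(2)^n, then for any nonzero message polynomial `M`
of degree at most `m` and any target `c`, the probability that `M(W_p)·s = c`
is at most `m·2^(1−n) + 2^(−n)`. The probability is expressed as a counting
ratio over the pairs `(p, s)`. -/
theorem axu_lfsr_toeplitz (n m : ℕ) (hn : 1 ≤ n) (hm : 1 ≤ m)
    (M : Polynomial (ZMod 2)) (hM : M ≠ 0) (hdeg : M.natDegree ≤ m)
    (c : Fin n → ZMod 2) :
    ({qs : Polynomial (ZMod 2) × (Fin n → ZMod 2) |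
        (qs.1.Monic ∧ Irreducible qs.1 ∧ qs.1.natDegree = n) ∧
        (Polynomial.aeval (lfsrMatrix fun j : Fin n => qs.1.coeff (j : ℕ)) M).mulVec qs.2
          = c}.ncard : ℝ) /
      (({q : Polynomial (ZMod 2) |
          q.Monic ∧ Irreducible q ∧ q.natDegree = n}.ncard : ℝ) * 2 ^ n)
      ≤ (m : ℝ) * 2 ^ ((1 : ℤ) - (n : ℤ)) + 2 ^ (-(n : ℤ)) :=
  axu_lfsr_toeplitz_general n m hn M hM hdeg c
end
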